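/- Let A* ∈ ℂ^{N×n} be isometric, x0 ∈ ℂ^n nonzero with y0 := A*x0 having all components nonzero, ω0 the componentwise phase of y0, B := A·diag(ω0) with A = (A*)^H, and 𝓑 := [Re(B); Im(B)] ∈ ℝ^{2n×N}. Then max{ ‖Im(B*u)‖ : u ∈ ℂ^n, ‖u‖ = 1, Re(x0^H (i u)) = 0 } = max{ ‖𝓑^T w‖ : w ∈ ℝ^{2n}, ‖w‖ = 1, w ⟂ G(x0) }, and this common value equals the second largest singular value λ_2 of 𝓑. -/

import Mathlib

/-!
With `w = G(-i u)` the first problem becomes the second: `Re(x0ᴴ (i u)) = -⟨G(-i u), G(x0)⟩` and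
`𝓑ᵀ G(-i u) = Im(B* u)`. Since `A*` is an isometry and `|ω0| = 1`, `𝓑ᵀ` is a contraction, so
`𝓑 𝓑ᵀ ≤ 1`, while `𝓑ᵀ G(x0) = |y0|` gives `𝓑 𝓑ᵀ G(x0) = G(x0)`. Thus `G(x0)` lies in the top
eigenspace of `𝓑 𝓑ᵀ`, and in an orthonormal eigenbasis the maximum of `wᵀ 𝓑 𝓑ᵀ w` over unit
`w ⟂ G(x0)` is the second eigenvalue `λ₂²`: at most one eigenvalue exceeds `λ₂²`, and if one does,
`G(x0)` is parallel to its eigenvector; and the maximum is attained on the span of two eigenvectors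
whose eigenvalues are at least `λ₂²`.
-/

open Matrix Complex

noncomputable section

/-- Euclidean norm of a complex vector. -/
noncomputable def cnorm {m : Type*} [Fintype m] (v : m → ℂ) : ℝ :=
  Real.sqrt (∑ i, ‖v i‖ ^ 2)

/-- Euclidean norm of a real vector. -/
noncomputable def rnorm {m : Type*} [Fintype m] (v : m → ℝ) : ℝ :=
  Real.sqrt (∑ i, v i ^ 2)

/-- The componentwise phase `z/|z|`. -/
noncomputable def phase (z : ℂ) : ℂ := z / ((‖z‖ : ℝ) : ℂ)

/-- `B = A · diag(ω0)` where `A = (A*)ᴴ`. -/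
noncomputable def Bmat {N n : ℕ} (Aadj : Matrix (Fin N) (Fin n) ℂ) (ω0 : Fin N → ℂ) :
    Matrix (Fin n) (Fin N) ℂ := fun i j => Aadjᴴ i j * ω0 j

/-- The real form `𝓑 = [Re B; Im B]` of `B`. -/
noncomputable def calB {N n : ℕ} (Aadj : Matrix (Fin N) (Fin n) ℂ) (ω0 : Fin N → ℂ) :
    Matrix (Fin n ⊕ Fin n) (Fin N) ℝ :=
  Matrix.fromRows ((Bmat Aadj ω0).map Complex.re) ((Bmat Aadj ω0).map Complex.im)

/-- The realification `G(v) = (Re v, Im v)` of a complex vector. -/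
def Gr {n : ℕ} (v : Fin n → ℂ) : Fin n ⊕ Fin n → ℝ :=
  Sum.elim (fun i => (v i).re) (fun i => (v i).im)

open Polynomial

section Multiplicities

variable {α ι κ : Type*} [Fintype ι] [Fintype κ]

lemma card_filter_eq_of_map_univ_eq {f : ι → α} {g : κ → α}
    (h : Finset.univ.val.map f = Finset.univ.val.map g) (p : α → Prop) [DecidablePred p] :
    (Finset.univ.filter fun i => p (f i)).card = (Finset.univ.filter fun k => p (g k)).card := by
  have := congrArg (Multiset.countP p) h
  rwa [Multiset.countP_map, Multiset.countP_map] at this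

lemma roots_prod_univ_X_sub_C (f : ι → ℝ) :
    (∏ i, (X - C (f i))).roots = Finset.univ.val.map f := by
  rw [roots_prod _ _ (Finset.prod_ne_zero_iff.mpr fun i _ => X_sub_C_ne_zero (f i))]
  simp

end Multiplicities

section Antitone

variable {K : ℕ} {lam : Fin K → ℝ}

lemma card_filter_lt_le_one_of_antitone (hlam : Antitone lam) (hK : 1 < K) :
    (Finset.univ.filter fun k => lam ⟨1, hK⟩ < lam k).card ≤ 1 := by
  refine Finset.card_le_one.mpr fun a ha b hb => ?_
  have key : ∀ k, lam ⟨1, hK⟩ < lam k → k.val = 0 := fun k hk => by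
    by_contra h
    exact (hlam (show (⟨1, hK⟩ : Fin K) ≤ k from Nat.one_le_iff_ne_zero.mpr h)).not_gt hk
  simp only [Finset.mem_filter, Finset.mem_univ, true_and] at ha hb
  exact Fin.ext ((key a ha).trans (key b hb).symm)

lemma one_lt_card_filter_le_of_antitone (hlam : Antitone lam) (hK : 1 < K) :
    1 < (Finset.univ.filter fun k => lam ⟨1, hK⟩ ≤ lam k).card := by
  refine Finset.one_lt_card.mpr ⟨⟨0, by omega⟩, ?_, ⟨1, hK⟩, ?_, by simp⟩ <;>
    simp only [Finset.mem_filter, Finset.mem_univ, true_and]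
  · exact hlam (Nat.zero_le _)
  · exact le_rfl

end Antitone

section DiagonalForm

variable {ι : Type*} [Fintype ι] {μ d : ι → ℝ} {b : ℝ}

lemma sum_mul_sq_le_of_dotProduct_eq_zero (hd : ∀ i, d i ≠ 0 → ∀ j, μ j ≤ μ i) (hd0 : d ≠ 0)
    (huniq : ∀ i j, b < μ i → b < μ j → i = j) {c : ι → ℝ} (hc : c ⬝ᵥ d = 0) :
    ∑ i, μ i * c i ^ 2 ≤ b * (c ⬝ᵥ c) := by
  classical
  rw [dotProduct, Finset.mul_sum]
  refine Finset.sum_le_sum fun i _ => ?_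
  rcases le_or_gt (μ i) b with hi | hi
  · nlinarith [sq_nonneg (c i)]
  obtain ⟨t, ht⟩ := Function.ne_iff.mp hd0
  have hti : t = i := huniq t i (hi.trans_le (hd t ht i)) hi
  have hdi : ∀ j, d j ≠ 0 → j = i := fun j hj =>
    huniq j i (hi.trans_le ((hd t ht i).trans (hti ▸ hd j hj t))) hi
  have hci : c i * d i = 0 := by
    rwa [dotProduct, Fintype.sum_eq_single i fun j hji => by
      rw [not_not.mp (mt (hdi j) hji), mul_zero]] at hc
  have : c i = 0 := (mul_eq_zero.mp hci).resolve_right (hti ▸ ht)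
  simp [this]

lemma exists_ne_zero_dotProduct_eq_zero_of_support_pair [DecidableEq ι] (d : ι → ℝ)
    {s t : ι} (hst : s ≠ t) :
    ∃ c : ι → ℝ, c ≠ 0 ∧ c ⬝ᵥ d = 0 ∧ ∀ i, c i ≠ 0 → i = s ∨ i = t := by
  by_cases hd : d s = 0 ∧ d t = 0
  · refine ⟨Pi.single s 1, fun h => by simpa using congrFun h s, ?_, fun i hi => ?_⟩
    · simp [hd.1]
    · exact .inl (by by_contra h; simp [h] at hi)
  · refine ⟨Pi.single s (d t) - Pi.single t (d s), fun h => hd ?_, ?_, fun i hi => ?_⟩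
    · have hs := congrFun h s
      have ht := congrFun h t
      simp [hst, hst.symm] at hs ht
      exact ⟨ht, hs⟩
    · simp [sub_dotProduct, single_dotProduct, mul_comm]
    · by_contra h
      simp [not_or.mp h] at hi

lemma exists_ne_zero_dotProduct_eq_zero_le_sum_mul_sq [DecidableEq ι] (d : ι → ℝ) {s t : ι}
    (hst : s ≠ t) (hs : b ≤ μ s) (ht : b ≤ μ t) :
    ∃ c : ι → ℝ, c ≠ 0 ∧ c ⬝ᵥ d = 0 ∧ b * (c ⬝ᵥ c) ≤ ∑ i, μ i * c i ^ 2 := by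
  obtain ⟨c, hc0, hcd, hsupp⟩ := exists_ne_zero_dotProduct_eq_zero_of_support_pair d hst
  refine ⟨c, hc0, hcd, ?_⟩
  rw [dotProduct, Finset.mul_sum]
  refine Finset.sum_le_sum fun i _ => ?_
  by_cases hci : c i = 0
  · simp [hci]
  · have : b ≤ μ i := by rcases hsupp i hci with rfl | rfl <;> assumption
    nlinarith [sq_nonneg (c i)]

end DiagonalForm

namespace Matrix.IsHermitian

variable {ι : Type*} [Fintype ι] [DecidableEq ι] {M : Matrix ι ι ℝ} (hM : M.IsHermitian)

local notation "U" => (hM.eigenvectorUnitary : Matrix ι ι ℝ)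

lemma eigenvectorUnitary_mul_transpose : U * Uᵀ = 1 := by
  rw [← conjTranspose_eq_transpose_of_trivial, ← star_eq_conjTranspose]
  exact Unitary.coe_mul_star_self _

lemma transpose_mul_eigenvectorUnitary : Uᵀ * U = 1 := by
  rw [← conjTranspose_eq_transpose_of_trivial, ← star_eq_conjTranspose]
  exact Unitary.coe_star_mul_self _

lemma transpose_eigenvectorUnitary_mulVec_eigenvectorUnitary_mulVec (c : ι → ℝ) :
    Uᵀ *ᵥ (U *ᵥ c) = c := by
  rw [mulVec_mulVec, transpose_mul_eigenvectorUnitary, one_mulVec]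

lemma dotProduct_transpose_eigenvectorUnitary_mulVec (v w : ι → ℝ) :
    (Uᵀ *ᵥ v) ⬝ᵥ (Uᵀ *ᵥ w) = v ⬝ᵥ w := by
  rw [dotProduct_comm, dotProduct_mulVec, ← mulVec_transpose, transpose_transpose, mulVec_mulVec,
    eigenvectorUnitary_mul_transpose, one_mulVec, dotProduct_comm]

lemma transpose_eigenvectorUnitary_mulVec_mulVec (w : ι → ℝ) :
    Uᵀ *ᵥ (M *ᵥ w) = fun i => hM.eigenvalues i * (Uᵀ *ᵥ w) i := by
  funext i
  have hMt : Mᵀ = M := by rw [← conjTranspose_eq_transpose_of_trivial]; exact hM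
  simp only [mulVec, eigenvectorUnitary_transpose_apply]
  rw [dotProduct_mulVec, ← mulVec_transpose, hMt, mulVec_eigenvectorBasis, smul_dotProduct,
    smul_eq_mul]

lemma dotProduct_mulVec_eq_sum (w : ι → ℝ) :
    w ⬝ᵥ M *ᵥ w = ∑ i, hM.eigenvalues i * (Uᵀ *ᵥ w) i ^ 2 := by
  rw [← hM.dotProduct_transpose_eigenvectorUnitary_mulVec,
    hM.transpose_eigenvectorUnitary_mulVec_mulVec, dotProduct]
  exact Finset.sum_congr rfl fun i _ => by ring

end Matrix.IsHermitian

section SecondEigenvalue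

variable {ι : Type*} [Fintype ι] [DecidableEq ι] {M : Matrix ι ι ℝ} {K : ℕ} {lam : Fin K → ℝ}

lemma Matrix.IsHermitian.map_univ_eigenvalues_eq (hM : M.IsHermitian)
    (hchar : M.charpoly = ∏ k, (X - C (lam k))) :
    Finset.univ.val.map lam = Finset.univ.val.map hM.eigenvalues := by
  rw [← roots_prod_univ_X_sub_C, ← roots_prod_univ_X_sub_C, ← hchar, hM.charpoly_eq]
  rfl

lemma dotProduct_mulVec_le_of_dotProduct_eq_zero (hM : M.IsHermitian) {a : ℝ} {g : ι → ℝ}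
    (hg0 : g ≠ 0) (hg : M *ᵥ g = a • g) (hmax : ∀ w, w ⬝ᵥ M *ᵥ w ≤ a * (w ⬝ᵥ w))
    (hlam : Antitone lam) (hK : 1 < K) (hchar : M.charpoly = ∏ k, (X - C (lam k)))
    {w : ι → ℝ} (hw : w ⬝ᵥ g = 0) :
    w ⬝ᵥ M *ᵥ w ≤ lam ⟨1, hK⟩ * (w ⬝ᵥ w) := by
  set U := (hM.eigenvectorUnitary : Matrix ι ι ℝ)
  have hμ_le : ∀ j, hM.eigenvalues j ≤ a := fun j => by
    have := hmax (U *ᵥ Pi.single j 1)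
    rw [hM.dotProduct_mulVec_eq_sum, ← hM.dotProduct_transpose_eigenvectorUnitary_mulVec,
      hM.transpose_eigenvectorUnitary_mulVec_eigenvectorUnitary_mulVec] at this
    simpa [Pi.single_apply] using this
  have hd : ∀ i, (Uᵀ *ᵥ g) i ≠ 0 → ∀ j, hM.eigenvalues j ≤ hM.eigenvalues i := fun i hi j => by
    have := congrFun (hM.transpose_eigenvectorUnitary_mulVec_mulVec g) i
    rw [hg, mulVec_smul, Pi.smul_apply, smul_eq_mul] at this
    rw [← mul_right_cancel₀ hi this]
    exact hμ_le j
  have hd0 : Uᵀ *ᵥ g ≠ 0 := fun h => hg0 <| dotProduct_self_eq_zero.mp <| by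
    rw [← hM.dotProduct_transpose_eigenvectorUnitary_mulVec, h, zero_dotProduct]
  have huniq : ∀ i j, lam ⟨1, hK⟩ < hM.eigenvalues i → lam ⟨1, hK⟩ < hM.eigenvalues j → i = j := by
    have := (card_filter_eq_of_map_univ_eq (hM.map_univ_eigenvalues_eq hchar)
      (lam ⟨1, hK⟩ < ·)).symm.trans_le (card_filter_lt_le_one_of_antitone hlam hK)
    exact fun i j hi hj => Finset.card_le_one.mp this i (by simpa) j (by simpa)
  rw [hM.dotProduct_mulVec_eq_sum, ← hM.dotProduct_transpose_eigenvectorUnitary_mulVec w w]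
  refine sum_mul_sq_le_of_dotProduct_eq_zero hd hd0 huniq ?_
  rwa [hM.dotProduct_transpose_eigenvectorUnitary_mulVec]

lemma exists_ne_zero_dotProduct_eq_zero_le_dotProduct_mulVec (hM : M.IsHermitian) (g : ι → ℝ)
    (hlam : Antitone lam) (hK : 1 < K) (hchar : M.charpoly = ∏ k, (X - C (lam k))) :
    ∃ w : ι → ℝ, w ≠ 0 ∧ w ⬝ᵥ g = 0 ∧ lam ⟨1, hK⟩ * (w ⬝ᵥ w) ≤ w ⬝ᵥ M *ᵥ w := by
  set U := (hM.eigenvectorUnitary : Matrix ι ι ℝ)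
  have hUU := hM.transpose_eigenvectorUnitary_mulVec_eigenvectorUnitary_mulVec
  obtain ⟨s, hs, t, ht, hst⟩ := Finset.one_lt_card.mp <|
    (one_lt_card_filter_le_of_antitone hlam hK).trans_eq
      (card_filter_eq_of_map_univ_eq (hM.map_univ_eigenvalues_eq hchar) (lam ⟨1, hK⟩ ≤ ·))
  simp only [Finset.mem_filter, Finset.mem_univ, true_and] at hs ht
  obtain ⟨c, hc0, hcd, hc⟩ :=
    exists_ne_zero_dotProduct_eq_zero_le_sum_mul_sq (Uᵀ *ᵥ g) hst hs ht
  refine ⟨U *ᵥ c, fun h => hc0 (by rw [← hUU c, h, mulVec_zero]), ?_, ?_⟩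
  · rwa [← hM.dotProduct_transpose_eigenvectorUnitary_mulVec, hUU]
  · rwa [hM.dotProduct_mulVec_eq_sum, ← hM.dotProduct_transpose_eigenvectorUnitary_mulVec, hUU]

end SecondEigenvalue

lemma dotProduct_self_nonneg {m : Type*} [Fintype m] (v : m → ℝ) : 0 ≤ v ⬝ᵥ v :=
  Finset.sum_nonneg fun i _ => mul_self_nonneg (v i)

lemma rnorm_eq_sqrt_dotProduct {m : Type*} [Fintype m] (v : m → ℝ) : rnorm v = √(v ⬝ᵥ v) := by
  simp only [rnorm, dotProduct, sq]

lemma rnorm_smul {m : Type*} [Fintype m] (k : ℝ) (v : m → ℝ) : rnorm (k • v) = |k| * rnorm v := by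
  simp only [rnorm, Pi.smul_apply, smul_eq_mul, mul_pow, ← Finset.mul_sum]
  rw [Real.sqrt_mul' _ (Finset.sum_nonneg fun i _ => sq_nonneg (v i)), Real.sqrt_sq_eq_abs]

theorem sSup_rnorm_transpose_mulVec_of_dotProduct_eq_zero {ι κ : Type*} [Fintype ι]
    [DecidableEq ι] [Fintype κ] (B : Matrix ι κ ℝ) {g : ι → ℝ} (hg0 : g ≠ 0)
    (hg : B *ᵥ (Bᵀ *ᵥ g) = g) (hB : ∀ w, (Bᵀ *ᵥ w) ⬝ᵥ (Bᵀ *ᵥ w) ≤ w ⬝ᵥ w) {K : ℕ} (hK : 1 < K)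
    (lam : Fin K → ℝ) (hlam : Antitone lam) (hchar : (B * Bᵀ).charpoly = ∏ k, (X - C (lam k))) :
    sSup {r : ℝ | ∃ w : ι → ℝ, rnorm w = 1 ∧ (∑ i, w i * g i) = 0 ∧ r = rnorm (Bᵀ *ᵥ w)}
      = √(lam ⟨1, hK⟩) := by
  have hM : (B * Bᵀ).IsHermitian := by
    simpa [conjTranspose_eq_transpose_of_trivial] using isHermitian_mul_conjTranspose_self B
  have hquad : ∀ w, w ⬝ᵥ (B * Bᵀ) *ᵥ w = (Bᵀ *ᵥ w) ⬝ᵥ (Bᵀ *ᵥ w) := fun w => by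
    rw [← mulVec_mulVec, dotProduct_mulVec, ← mulVec_transpose]
  have hsqrt : ∀ w : ι → ℝ, √(lam ⟨1, hK⟩ * (w ⬝ᵥ w)) = √(lam ⟨1, hK⟩) * rnorm w := fun w => by
    rw [Real.sqrt_mul' _ (dotProduct_self_nonneg w), rnorm_eq_sqrt_dotProduct]
  have hupper : ∀ w, w ⬝ᵥ g = 0 → rnorm (Bᵀ *ᵥ w) ≤ √(lam ⟨1, hK⟩) * rnorm w := fun w hw => by
    rw [rnorm_eq_sqrt_dotProduct, ← hsqrt, ← hquad]
    exact Real.sqrt_le_sqrt <| dotProduct_mulVec_le_of_dotProduct_eq_zero hM hg0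
      (by rwa [one_smul, ← mulVec_mulVec]) (fun v => by rw [one_mul, hquad]; exact hB v)
      hlam hK hchar hw
  obtain ⟨w, hw0, hwg, hw⟩ :=
    exists_ne_zero_dotProduct_eq_zero_le_dotProduct_mulVec hM g hlam hK hchar
  have hlower : √(lam ⟨1, hK⟩) * rnorm w ≤ rnorm (Bᵀ *ᵥ w) := by
    rw [rnorm_eq_sqrt_dotProduct (Bᵀ *ᵥ w), ← hsqrt, ← hquad]
    exact Real.sqrt_le_sqrt hw
  have hnorm : 0 < rnorm w := by
    rw [rnorm_eq_sqrt_dotProduct, Real.sqrt_pos]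
    exact (dotProduct_self_nonneg w).lt_of_ne (Ne.symm (mt dotProduct_self_eq_zero.mp hw0))
  have hunit : rnorm ((rnorm w)⁻¹ • w) = 1 := by
    rw [rnorm_smul, abs_inv, abs_of_pos hnorm, inv_mul_cancel₀ hnorm.ne']
  have hwg' : ((rnorm w)⁻¹ • w) ⬝ᵥ g = 0 := by rw [smul_dotProduct, hwg, smul_zero]
  refine IsGreatest.csSup_eq ⟨⟨(rnorm w)⁻¹ • w, hunit, hwg', le_antisymm ?_ ?_⟩, ?_⟩
  · rw [mulVec_smul, rnorm_smul, abs_inv, abs_of_pos hnorm, le_inv_mul_iff₀ hnorm, mul_comm]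
    exact hlower
  · simpa [hunit] using hupper _ hwg'
  · rintro r ⟨v, hv1, hvg, rfl⟩
    simpa [hv1] using hupper v hvg

section Phase

variable {z : ℂ}

lemma norm_phase (hz : z ≠ 0) : ‖phase z‖ = 1 := by
  rw [phase, norm_div, Complex.norm_real, norm_norm, div_self (norm_ne_zero_iff.mpr hz)]

lemma phase_mul_norm (hz : z ≠ 0) : phase z * (‖z‖ : ℂ) = z := by
  have : (‖z‖ : ℂ) ≠ 0 := by exact_mod_cast norm_ne_zero_iff.mpr hz
  rw [phase, div_mul_cancel₀ _ this]

lemma conj_phase_mul_self (hz : z ≠ 0) : (starRingEnd ℂ) (phase z) * z = ‖z‖ := by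
  have : (‖z‖ : ℂ) ≠ 0 := by exact_mod_cast norm_ne_zero_iff.mpr hz
  rw [phase, map_div₀, Complex.conj_ofReal, div_mul_eq_mul_div, mul_comm, Complex.mul_conj',
    sq, mul_div_cancel_right₀ _ this]

end Phase

section Realification

variable {n : ℕ}

lemma Gr_surjective : Function.Surjective (Gr : (Fin n → ℂ) → Fin n ⊕ Fin n → ℝ) :=
  fun w => ⟨fun i => ⟨w (.inl i), w (.inr i)⟩, funext fun i => by cases i <;> rfl⟩

lemma Gr_injective : Function.Injective (Gr : (Fin n → ℂ) → Fin n ⊕ Fin n → ℝ) :=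
  fun _ _ h => funext fun i =>
    Complex.ext (congrFun h (.inl i)) (congrFun h (.inr i))

lemma Gr_zero : Gr (0 : Fin n → ℂ) = 0 := funext fun i => by cases i <;> rfl

lemma Gr_dotProduct_Gr (u v : Fin n → ℂ) :
    Gr u ⬝ᵥ Gr v = (∑ i, (starRingEnd ℂ) (v i) * u i).re := by
  simp only [dotProduct, Fintype.sum_sum_type, Gr, Sum.elim_inl, Sum.elim_inr, Complex.re_sum,
    ← Finset.sum_add_distrib, Complex.mul_re, Complex.conj_re, Complex.conj_im]
  exact Finset.sum_congr rfl fun i _ => by ring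

lemma Gr_dotProduct_self (v : Fin n → ℂ) : Gr v ⬝ᵥ Gr v = ∑ i, Complex.normSq (v i) := by
  rw [Gr_dotProduct_Gr, Complex.re_sum]
  simp [Complex.normSq_apply]

lemma rnorm_Gr (v : Fin n → ℂ) : rnorm (Gr v) = cnorm v := by
  rw [rnorm_eq_sqrt_dotProduct, Gr_dotProduct_self, cnorm]
  simp_rw [Complex.sq_norm]

end Realification

lemma star_dotProduct_self_eq_sum_normSq {m : Type*} [Fintype m] (x : m → ℂ) :
    star x ⬝ᵥ x = ((∑ i, Complex.normSq (x i) : ℝ) : ℂ) := by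
  push_cast
  exact Finset.sum_congr rfl fun i _ => Complex.normSq_eq_conj_mul_self.symm

lemma sum_normSq_mulVec_of_conjTranspose_mul_self {N n : ℕ} {A : Matrix (Fin N) (Fin n) ℂ}
    (hA : Aᴴ * A = 1) (v : Fin n → ℂ) :
    ∑ j, Complex.normSq ((A *ᵥ v) j) = ∑ i, Complex.normSq (v i) := by
  have h : star (A *ᵥ v) ⬝ᵥ A *ᵥ v = star v ⬝ᵥ v := by
    rw [star_mulVec, ← dotProduct_mulVec, mulVec_mulVec, hA, one_mulVec]
  rwa [star_dotProduct_self_eq_sum_normSq, star_dotProduct_self_eq_sum_normSq,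
    Complex.ofReal_inj] at h

section RealForm

variable {N n : ℕ} {A : Matrix (Fin N) (Fin n) ℂ} {ω : Fin N → ℂ}

lemma transpose_calB_mulVec_Gr (v : Fin n → ℂ) :
    (calB A ω)ᵀ *ᵥ Gr v = fun j => ((starRingEnd ℂ) (ω j) * (A *ᵥ v) j).re := by
  funext j
  simp only [mulVec, dotProduct, Fintype.sum_sum_type, transpose_apply, calB, fromRows_apply_inl,
    fromRows_apply_inr, map_apply, Bmat, conjTranspose_apply, Gr, Sum.elim_inl, Sum.elim_inr,
    Finset.mul_sum, Complex.re_sum, ← Finset.sum_add_distrib]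
  refine Finset.sum_congr rfl fun i _ => ?_
  simp only [Complex.mul_re, Complex.mul_im, Complex.conj_re, Complex.conj_im, star_def]
  ring

lemma transpose_calB_mulVec_Gr_neg_I_mul (u : Fin n → ℂ) :
    (calB A ω)ᵀ *ᵥ Gr (fun i => -Complex.I * u i) =
      fun j => ((starRingEnd ℂ) (ω j) * (A *ᵥ u) j).im := by
  rw [transpose_calB_mulVec_Gr, show (fun i => -Complex.I * u i) = -Complex.I • u from rfl,
    mulVec_smul]
  funext j
  simp only [Pi.smul_apply, smul_eq_mul, Complex.mul_re, Complex.mul_im, Complex.neg_re,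
    Complex.neg_im, Complex.I_re, Complex.I_im]
  ring

lemma calB_mulVec (r : Fin N → ℝ) :
    calB A ω *ᵥ r = Gr (Bmat A ω *ᵥ fun j => (r j : ℂ)) := by
  funext i
  rcases i with i | i <;>
    simp [calB, Gr, mulVec, dotProduct, Complex.re_sum, Complex.im_sum]

lemma transpose_calB_mulVec_dotProduct_self_le (hA : Aᴴ * A = 1) (hω : ∀ j, ‖ω j‖ = 1)
    (w : Fin n ⊕ Fin n → ℝ) : ((calB A ω)ᵀ *ᵥ w) ⬝ᵥ ((calB A ω)ᵀ *ᵥ w) ≤ w ⬝ᵥ w := by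
  obtain ⟨v, rfl⟩ := Gr_surjective w
  rw [Gr_dotProduct_self, ← sum_normSq_mulVec_of_conjTranspose_mul_self hA,
    transpose_calB_mulVec_Gr]
  refine Finset.sum_le_sum fun j _ => ?_
  calc _ ≤ Complex.normSq ((starRingEnd ℂ) (ω j) * (A *ᵥ v) j) := Complex.re_sq_le_normSq _
    _ = Complex.normSq ((A *ᵥ v) j) := by
      rw [Complex.normSq_mul, Complex.normSq_conj, ← Complex.sq_norm, hω j, one_pow, one_mul]

lemma calB_mulVec_transpose_calB_mulVec_Gr (hA : Aᴴ * A = 1) {x : Fin n → ℂ}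
    (hx : ∀ j, (A *ᵥ x) j ≠ 0) (hω : ∀ j, ω j = phase ((A *ᵥ x) j)) :
    calB A ω *ᵥ ((calB A ω)ᵀ *ᵥ Gr x) = Gr x := by
  have hre : (calB A ω)ᵀ *ᵥ Gr x = fun j => ‖(A *ᵥ x) j‖ := by
    rw [transpose_calB_mulVec_Gr]
    funext j
    rw [hω j, conj_phase_mul_self (hx j), Complex.ofReal_re]
  have hB : Bmat A ω *ᵥ (fun j => ((‖(A *ᵥ x) j‖ : ℝ) : ℂ)) = Aᴴ *ᵥ (A *ᵥ x) := by
    funext i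
    change ∑ j, Aᴴ i j * ω j * _ = ∑ j, Aᴴ i j * (A *ᵥ x) j
    refine Fintype.sum_congr _ _ fun j => ?_
    rw [mul_assoc, hω j, phase_mul_norm (hx j)]
  rw [hre, calB_mulVec, hB, mulVec_mulVec, hA, one_mulVec]

lemma setOf_rnorm_im_eq_setOf_rnorm_transpose_calB (x : Fin n → ℂ) :
    {r : ℝ | ∃ u : Fin n → ℂ, cnorm u = 1 ∧
        (∑ j, (starRingEnd ℂ) (x j) * (Complex.I * u j)).re = 0 ∧
        r = rnorm (fun j => ((starRingEnd ℂ) (ω j) * A.mulVec u j).im)}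
      = {r : ℝ | ∃ w : Fin n ⊕ Fin n → ℝ, rnorm w = 1 ∧ (∑ i, w i * Gr x i) = 0 ∧
        r = rnorm ((calB A ω)ᵀ.mulVec w)} := by
  have hnorm : ∀ u : Fin n → ℂ, rnorm (Gr fun i => -Complex.I * u i) = cnorm u := fun u => by
    simp [rnorm_Gr, cnorm]
  have horth : ∀ u : Fin n → ℂ, (∑ i, Gr (fun i => -Complex.I * u i) i * Gr x i)
      = -(∑ j, (starRingEnd ℂ) (x j) * (Complex.I * u j)).re := fun u => by
    rw [← dotProduct, Gr_dotProduct_Gr, ← Complex.neg_re, ← Finset.sum_neg_distrib]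
    simp only [neg_mul, mul_neg]
  ext r
  constructor
  · rintro ⟨u, hu, hux, rfl⟩
    exact ⟨_, (hnorm u).trans hu, by rw [horth, hux, neg_zero],
      by rw [transpose_calB_mulVec_Gr_neg_I_mul]⟩
  · rintro ⟨w, hw, hwx, rfl⟩
    obtain ⟨v, rfl⟩ := Gr_surjective w
    have hv : (fun i => -Complex.I * (Complex.I * v i)) = v := funext fun i => by
      rw [← mul_assoc, neg_mul, Complex.I_mul_I, neg_neg, one_mul]
    refine ⟨fun i => Complex.I * v i, ?_, ?_, ?_⟩
    · rwa [← hnorm, hv]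
    · rw [← neg_eq_zero, ← horth, hv, hwx]
    · rw [← transpose_calB_mulVec_Gr_neg_I_mul, hv]

end RealForm

/-- The two constrained maxima agree and equal the second largest singular value `λ₂` of
the real form `𝓑` of `B`. -/
theorem stmt10 (N n : ℕ) (hn : 0 < n)
    (Aadj : Matrix (Fin N) (Fin n) ℂ) (hiso : Aadjᴴ * Aadj = 1)
    (x0 : Fin n → ℂ) (hx0 : x0 ≠ 0) (hy0 : ∀ j, Aadj.mulVec x0 j ≠ 0)
    (ω0 : Fin N → ℂ) (hω0 : ∀ j, ω0 j = phase (Aadj.mulVec x0 j)) :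
    (sSup { r : ℝ | ∃ u : Fin n → ℂ, cnorm u = 1 ∧
          (∑ j, (starRingEnd ℂ) (x0 j) * (Complex.I * u j)).re = 0 ∧
          r = rnorm (fun j => ((starRingEnd ℂ) (ω0 j) * Aadj.mulVec u j).im) }
        = sSup { r : ℝ | ∃ w : Fin n ⊕ Fin n → ℝ, rnorm w = 1 ∧
          (∑ i, w i * Gr x0 i) = 0 ∧
          r = rnorm ((calB Aadj ω0)ᵀ.mulVec w) }) ∧
    ∀ lam : Fin (2 * n) → ℝ, Antitone lam →
      (calB Aadj ω0 * (calB Aadj ω0)ᵀ).charpoly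
          = ∏ k : Fin (2 * n), (Polynomial.X - Polynomial.C (lam k)) →
      sSup { r : ℝ | ∃ u : Fin n → ℂ, cnorm u = 1 ∧
          (∑ j, (starRingEnd ℂ) (x0 j) * (Complex.I * u j)).re = 0 ∧
          r = rnorm (fun j => ((starRingEnd ℂ) (ω0 j) * Aadj.mulVec u j).im) }
        = Real.sqrt (lam ⟨1, by omega⟩) := by
  rw [setOf_rnorm_im_eq_setOf_rnorm_transpose_calB]
  refine ⟨rfl, fun lam hlam hchar => ?_⟩
  have hω : ∀ j, ‖ω0 j‖ = 1 := fun j => by rw [hω0 j]; exact norm_phase (hy0 j)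
  have hGx0 : Gr x0 ≠ 0 := fun h => hx0 (Gr_injective (h.trans Gr_zero.symm))
  exact sSup_rnorm_transpose_mulVec_of_dotProduct_eq_zero (calB Aadj ω0) hGx0
    (calB_mulVec_transpose_calB_mulVec_Gr hiso hy0 hω0)
    (transpose_calB_mulVec_dotProduct_self_le hiso hω) (by omega) lam hlam hchar
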